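/- arXiv:1805.01880 — 2 statements merged into one kernel-verified Lean document; each statement's English description precedes it below -/
import Mathlib

section
/- Let A be a finite-dimensional algebra, (T, F) a torsion pair in mod A, and N an A-module. If tN denotes the trace of N in T (the maximal submodule of N lying in T), and f : M' → N is a minimal right add(M)-approximation of N where T = Fac M for a module M, then tN = Im f. -/
universe u

/-- `X` lies in `Fac M`: it is a quotient of a finite power of `M`. -/
def InFac (A : Type u) [Ring A] (M : Type u) [AddCommGroup M] [Module A M]
    (X : Type u) [AddCommGroup X] [Module A X] : Prop :=
  ∃ (l : ℕ) (p : (Fin l → M) →ₗ[A] X), Function.Surjective p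

/-- `X` lies in `add M`: it is a direct summand of a finite power of `M`. -/
def InAdd (A : Type u) [Ring A] (M : Type u) [AddCommGroup M] [Module A M]
    (X : Type u) [AddCommGroup X] [Module A X] : Prop :=
  ∃ (l : ℕ) (ι : X →ₗ[A] (Fin l → M)) (ρ : (Fin l → M) →ₗ[A] X),
    ρ ∘ₗ ι = LinearMap.id

/-- For the torsion pair `(Fac M, M^⊥)`, the trace `tN` of `N` in `Fac M`
(the maximal submodule of `N` lying in `Fac M`) equals the image of a minimal right
`add M`-approximation `f : M' → N`. -/
theorem trace_eq_image_of_minimal_right_approximation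
    (k A M N M' : Type u) [Field k] [Ring A] [Algebra k A] [FiniteDimensional k A]
    [AddCommGroup M] [Module A M] [Module.Finite A M]
    [AddCommGroup N] [Module A N] [Module.Finite A N]
    [AddCommGroup M'] [Module A M'] [Module.Finite A M']
    (tN : Submodule A N)
    (htN : InFac A M ↥tN)
    (hmax : ∀ L : Submodule A N, InFac A M ↥L → L ≤ tN)
    (hM' : InAdd A M M')
    (f : M' →ₗ[A] N)
    (happrox : ∀ (X : Type u) [AddCommGroup X] [Module A X],
      InAdd A M X → ∀ g : X →ₗ[A] N, ∃ h : X →ₗ[A] M', f ∘ₗ h = g)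
    (hmin : ∀ h : M' →ₗ[A] M', f ∘ₗ h = f → Function.Bijective h) :
    tN = LinearMap.range f := by
  apply le_antisymm
  · -- tN ≤ range f
    obtain ⟨l, p, hp⟩ := htN
    obtain ⟨h, hh⟩ := happrox (Fin l → M) ⟨l, LinearMap.id, LinearMap.id, rfl⟩
      (tN.subtype ∘ₗ p)
    intro x hx
    obtain ⟨y, hy⟩ := hp ⟨x, hx⟩
    refine ⟨h y, ?_⟩
    have := LinearMap.congr_fun hh y
    simp only [LinearMap.coe_comp, Function.comp_apply, Submodule.coe_subtype] at this
    rw [this, hy]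
  · -- range f ≤ tN
    obtain ⟨l, ι, ρ, hρ⟩ := hM'
    have hρs : Function.Surjective ρ := fun x => ⟨ι x, LinearMap.congr_fun hρ x⟩
    exact hmax _ ⟨l, f.rangeRestrict ∘ₗ ρ,
      (f.surjective_rangeRestrict).comp hρs⟩
end

section
/- Let A be a finite-dimensional algebra, M a τ-rigid A-module (Hom_A(M, τM) = 0), and p : M^l → N a surjection onto an A-module N. Then Hom_A(N, τM) = 0. -/
universe u

/-- Let `A` be a finite-dimensional algebra, `M` a `τ`-rigid `A`-module
(`Hom_A(M, τM) = 0`) and `p : M^l → N` a surjection onto an `A`-module `N`.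
Then `Hom_A(N, τM) = 0`. -/
theorem hom_to_tauM_vanishes_of_surjection_from_power
    (k A M N τM : Type u) [Field k] [Ring A] [Algebra k A] [FiniteDimensional k A]
    [AddCommGroup M] [Module A M] [Module.Finite A M]
    [AddCommGroup N] [Module A N] [Module.Finite A N]
    [AddCommGroup τM] [Module A τM] [Module.Finite A τM]
    (hrigid : ∀ g : M →ₗ[A] τM, g = 0)
    (l : ℕ) (p : (Fin l → M) →ₗ[A] N) (hp : Function.Surjective p) :
    ∀ g : N →ₗ[A] τM, g = 0 := by
  intro g
  ext x
  obtain ⟨v, rfl⟩ := hp x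
  have hv : v = ∑ i : Fin l, Pi.single i (v i) := by
    funext j
    simp [Finset.sum_apply, Pi.single_apply]
  rw [hv, map_sum, map_sum]
  apply Finset.sum_eq_zero
  intro i _
  have := hrigid ((g.comp p).comp (LinearMap.single A (fun _ => M) i))
  exact congrFun (congrArg (fun f => f.toFun) this) (v i)
end
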